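/- Let φ(t) := (2/π) K(1/cosh(t/2)) / (1 + e^{-t}) - θ(t), where K is the complete elliptic integral of the first kind and θ is the Heaviside step function. Then φ(t) > 0 for all t ≠ 0 and φ(t) decays exponentially as t → ±∞, i.e. there exist C, c > 0 with φ(t) ≤ C e^{-c|t|} for all |t| ≥ 1. -/

import Mathlib

open Real MeasureTheory

/-- The complete elliptic integral of the first kind. -/
noncomputable def ellipticK (k : ℝ) : ℝ :=
  ∫ θ in (0 : ℝ)..(π / 2), 1 / Real.sqrt (1 - k ^ 2 * Real.sin θ ^ 2)

/-- The kernel `φ(t) = (2/π) K(1/cosh(t/2))/(1+e^{-t}) - θ(t)`. -/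
noncomputable def kernelPhi (t : ℝ) : ℝ :=
  (2 / π) * ellipticK (1 / Real.cosh (t / 2)) / (1 + Real.exp (-t))
    - (if 0 ≤ t then 1 else 0)

/-!
Put `b = tanh (|t|/2)`, the complementary modulus of `k = 1/cosh (t/2)`. Since
`2/(1 + e^{-t}) = 1 ± b`, we get `φ(t) = (1 + b) K(k)/π - 1` for `t > 0` and `φ(t) = (1 - b) K(k)/π`
for `t < 0`, so everything follows from `π/(1 + b) < K(k) ≤ π/(2b)`: this gives
`0 < φ(t) ≤ (1 - b)/(2b) = e^{-|t|}/(1 - e^{-|t|})`.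
The upper bound is `1 - k² sin² θ = cos² θ + b² sin² θ ≥ b²`. The lower bound is the first step of
Gauss's arithmetic–geometric mean for `K`; here it comes from AM–GM in the form
`√X ≤ (X + b)/(2√b)`, which bounds the integrand below by `2√b/(1 + b)` times
`1/(cos² θ + b sin² θ)`, whose integral over `[0, π/2]` is `π/(2√b)`.
-/

lemma cos_sq_add_mul_sin_sq_pos {c : ℝ} (hc : 0 < c) (θ : ℝ) :
    0 < cos θ ^ 2 + c * sin θ ^ 2 := by
  rcases le_total c 1 with h | h <;>
    nlinarith [sin_sq_add_cos_sq θ, sq_nonneg (sin θ), sq_nonneg (cos θ)]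

/-- A continuous antiderivative of `1/(cos² θ + a² sin² θ)`: it agrees with `arctan (a tan θ)/a`
on `(-π/2, π/2)`, since `arctan (a tan θ) - θ = arctan ((a - 1) tan θ / (1 + a tan² θ))`. -/
lemma hasDerivAt_arctan_mul_tan {a : ℝ} (ha : 0 < a) (θ : ℝ) :
    HasDerivAt (fun θ => (θ + arctan ((a - 1) * sin θ * cos θ / (cos θ ^ 2 + a * sin θ ^ 2))) / a)
      (1 / (cos θ ^ 2 + a ^ 2 * sin θ ^ 2)) θ := by
  have hD := cos_sq_add_mul_sin_sq_pos ha θ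
  have hD2 := cos_sq_add_mul_sin_sq_pos (pow_pos ha 2) θ
  have hN := ((hasDerivAt_sin θ).const_mul (a - 1)).mul (hasDerivAt_cos θ)
  have hDen := ((hasDerivAt_cos θ).pow 2).add (((hasDerivAt_sin θ).pow 2).const_mul a)
  refine (((hasDerivAt_id' θ).add ((hN.div hDen hD.ne').arctan)).div_const a).congr_deriv ?_
  have hsc := sin_sq_add_cos_sq θ
  simp only [Pi.mul_apply, Pi.div_apply, Pi.add_apply, Pi.pow_apply, Nat.cast_ofNat]
  field_simp
  norm_num
  linear_combination a * (cos θ ^ 2 + a ^ 2 * sin θ ^ 2) * (sin θ ^ 2 + cos θ ^ 2) * hsc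

lemma integral_inv_cos_sq_add_sq_mul_sin_sq {a : ℝ} (ha : 0 < a) :
    ∫ θ in (0 : ℝ)..(π / 2), 1 / (cos θ ^ 2 + a ^ 2 * sin θ ^ 2) = π / (2 * a) := by
  rw [intervalIntegral.integral_eq_sub_of_hasDerivAt (fun θ _ => hasDerivAt_arctan_mul_tan ha θ)
    ((continuous_const.div (by fun_prop) fun θ =>
      (cos_sq_add_mul_sin_sq_pos (pow_pos ha 2) θ).ne').intervalIntegrable _ _)]
  simp only [sin_pi_div_two, cos_pi_div_two, sin_zero, cos_zero]
  norm_num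
  field_simp

lemma two_mul_div_add_sq_le_inv_sqrt {x : ℝ} (hx : 0 < x) (a : ℝ) :
    2 * a / (x + a ^ 2) ≤ 1 / √x := by
  have hs := sq_sqrt hx.le
  rw [div_le_div_iff₀ (by positivity) (sqrt_pos.2 hx)]
  nlinarith [sq_nonneg (√x - a)]

lemma continuous_inv_sqrt_cos_sq_add_mul_sin_sq {c : ℝ} (hc : 0 < c) :
    Continuous fun θ => 1 / √(cos θ ^ 2 + c * sin θ ^ 2) :=
  continuous_const.div (by fun_prop) fun θ => (sqrt_pos.2 (cos_sq_add_mul_sin_sq_pos hc θ)).ne'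

lemma ellipticK_eq_integral_of_sq_add_sq {k b : ℝ} (hkb : k ^ 2 + b ^ 2 = 1) :
    ellipticK k = ∫ θ in (0 : ℝ)..(π / 2), 1 / √(cos θ ^ 2 + b ^ 2 * sin θ ^ 2) := by
  unfold ellipticK
  congr with θ
  congr 2
  linear_combination (-sin θ ^ 2) * hkb - sin_sq_add_cos_sq θ

lemma ellipticK_le_pi_div_two_mul {k b : ℝ} (hb : 0 < b) (hkb : k ^ 2 + b ^ 2 = 1) :
    ellipticK k ≤ π / (2 * b) := by
  have hconst : ∫ _ in (0 : ℝ)..(π / 2), 1 / b = π / (2 * b) := by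
    rw [intervalIntegral.integral_const, smul_eq_mul]
    field_simp
    ring
  rw [ellipticK_eq_integral_of_sq_add_sq hkb, ← hconst]
  refine intervalIntegral.integral_mono_on (by positivity)
    ((continuous_inv_sqrt_cos_sq_add_mul_sin_sq (pow_pos hb 2)).intervalIntegrable _ _)
    intervalIntegrable_const fun θ _ => ?_
  have hb_sq_le : b ^ 2 ≤ cos θ ^ 2 + b ^ 2 * sin θ ^ 2 := by
    nlinarith [sin_sq_add_cos_sq θ, sq_nonneg k, sq_nonneg (cos θ)]
  calc 1 / √(cos θ ^ 2 + b ^ 2 * sin θ ^ 2) ≤ 1 / √(b ^ 2) := by gcongr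
    _ = 1 / b := by rw [sqrt_sq hb.le]

lemma pi_div_one_add_lt_ellipticK {k b : ℝ} (hb0 : 0 < b) (hb1 : b < 1)
    (hkb : k ^ 2 + b ^ 2 = 1) : π / (1 + b) < ellipticK k := by
  set a := √b
  have ha : 0 < a := sqrt_pos.2 hb0
  have ha_sq : a ^ 2 = b := sq_sqrt hb0.le
  have hminorant : ∫ θ in (0 : ℝ)..(π / 2), 2 * a / (1 + b) * (1 / (cos θ ^ 2 + a ^ 2 * sin θ ^ 2))
      = π / (1 + b) := by
    rw [intervalIntegral.integral_const_mul, integral_inv_cos_sq_add_sq_mul_sin_sq ha]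
    field_simp
  rw [ellipticK_eq_integral_of_sq_add_sq hkb, ← hminorant]
  refine intervalIntegral.integral_lt_integral_of_continuousOn_of_le_of_exists_lt (by positivity)
    (Continuous.continuousOn (continuous_const.mul (continuous_const.div (by fun_prop)
      fun θ => (cos_sq_add_mul_sin_sq_pos (pow_pos ha 2) θ).ne')))
    (continuous_inv_sqrt_cos_sq_add_mul_sin_sq (pow_pos hb0 2)).continuousOn
    (fun θ _ => ?_) ⟨0, ⟨le_rfl, by positivity⟩, ?_⟩
  · have hX := cos_sq_add_mul_sin_sq_pos (pow_pos hb0 2) θ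
    have hden := cos_sq_add_mul_sin_sq_pos hb0 θ
    calc 2 * a / (1 + b) * (1 / (cos θ ^ 2 + a ^ 2 * sin θ ^ 2))
        = 2 * a / ((cos θ ^ 2 + b ^ 2 * sin θ ^ 2) + a ^ 2) := by
          rw [ha_sq]
          field_simp
          linear_combination (-b) * sin_sq_add_cos_sq θ
      _ ≤ 1 / √(cos θ ^ 2 + b ^ 2 * sin θ ^ 2) := two_mul_div_add_sq_le_inv_sqrt hX a
  · have ha1 : a ≠ 1 := fun h => by rw [h] at ha_sq; linarith
    simp only [sin_zero, cos_zero]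
    norm_num
    rw [div_lt_one (by positivity), ← ha_sq]
    nlinarith [sq_pos_of_ne_zero (sub_ne_zero.2 ha1)]

lemma tanh_half_eq (t : ℝ) : tanh (t / 2) = (1 - exp (-t)) / (1 + exp (-t)) := by
  have h : exp (-t) = exp (-(t / 2)) ^ 2 := by rw [← exp_nat_mul]; ring_nf
  have h' : exp (t / 2) * exp (-(t / 2)) = 1 := by rw [← exp_add]; simp
  rw [tanh_eq, h]
  field_simp
  linear_combination 2 * exp (-(t / 2)) * h'

lemma tanh_half_pos {t : ℝ} (ht : 0 < t) : 0 < tanh (t / 2) := by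
  rw [tanh_half_eq]
  exact div_pos (sub_pos.2 (exp_lt_one_iff.2 (neg_lt_zero.2 ht))) (by positivity)

lemma one_add_tanh_half_eq (t : ℝ) : 1 + tanh (t / 2) = 2 / (1 + exp (-t)) := by
  rw [tanh_half_eq]
  field_simp
  ring

lemma one_sub_tanh_half_div {s : ℝ} (hs : 0 < s) :
    (1 - tanh (s / 2)) / (2 * tanh (s / 2)) = exp (-s) / (1 - exp (-s)) := by
  have : 0 < 1 - exp (-s) := sub_pos.2 (exp_lt_one_iff.2 (neg_lt_zero.2 hs))
  rw [tanh_half_eq]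
  field_simp
  ring

lemma inv_cosh_sq_add_tanh_sq (x : ℝ) : (1 / cosh x) ^ 2 + tanh x ^ 2 = 1 := by
  have := cosh_pos x
  rw [tanh_eq_sinh_div_cosh]
  field_simp
  linear_combination (cosh_sq x).symm

lemma pi_div_one_add_tanh_half_lt_ellipticK {s : ℝ} (hs : 0 < s) :
    π / (1 + tanh (s / 2)) < ellipticK (1 / cosh (s / 2)) :=
  pi_div_one_add_lt_ellipticK (tanh_half_pos hs) (tanh_lt_one _) (inv_cosh_sq_add_tanh_sq _)

lemma ellipticK_inv_cosh_half_le {s : ℝ} (hs : 0 < s) :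
    ellipticK (1 / cosh (s / 2)) ≤ π / (2 * tanh (s / 2)) :=
  ellipticK_le_pi_div_two_mul (tanh_half_pos hs) (inv_cosh_sq_add_tanh_sq _)

lemma kernelPhi_of_pos {t : ℝ} (ht : 0 < t) :
    kernelPhi t = (1 + tanh (t / 2)) / π * ellipticK (1 / cosh (t / 2)) - 1 := by
  rw [kernelPhi, if_pos ht.le, one_add_tanh_half_eq]
  ring

lemma kernelPhi_of_neg {t : ℝ} (ht : t < 0) :
    kernelPhi t = (1 - tanh (-t / 2)) / π * ellipticK (1 / cosh (-t / 2)) := by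
  rw [kernelPhi, if_neg (not_le.2 ht), neg_div, tanh_neg, cosh_neg, sub_neg_eq_add,
    one_add_tanh_half_eq]
  ring

lemma kernelPhi_pos {t : ℝ} (ht : t ≠ 0) : 0 < kernelPhi t := by
  rcases ht.lt_or_gt with ht | ht
  · have hK := pi_div_one_add_tanh_half_lt_ellipticK (neg_pos.2 ht)
    have hb := tanh_half_pos (neg_pos.2 ht)
    rw [kernelPhi_of_neg ht]
    exact mul_pos (div_pos (sub_pos.2 (tanh_lt_one _)) pi_pos)
      ((div_pos pi_pos (by linarith)).trans hK)
  · have hK := pi_div_one_add_tanh_half_lt_ellipticK ht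
    have hb := tanh_half_pos ht
    rw [kernelPhi_of_pos ht, sub_pos, div_mul_eq_mul_div, one_lt_div pi_pos]
    rwa [div_lt_iff₀' (by linarith)] at hK

lemma kernelPhi_le_exp_neg_abs_div {t : ℝ} (ht : t ≠ 0) :
    kernelPhi t ≤ exp (-|t|) / (1 - exp (-|t|)) := by
  rw [← one_sub_tanh_half_div (abs_pos.2 ht)]
  rcases ht.lt_or_gt with ht | ht
  · have hK := ellipticK_inv_cosh_half_le (neg_pos.2 ht)
    have hb := tanh_half_pos (neg_pos.2 ht)
    rw [kernelPhi_of_neg ht, abs_of_neg ht]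
    calc (1 - tanh (-t / 2)) / π * ellipticK (1 / cosh (-t / 2))
        ≤ (1 - tanh (-t / 2)) / π * (π / (2 * tanh (-t / 2))) := by
          gcongr
          exact div_nonneg (sub_nonneg.2 (tanh_lt_one _).le) pi_pos.le
      _ = (1 - tanh (-t / 2)) / (2 * tanh (-t / 2)) := by field_simp
  · have hK := ellipticK_inv_cosh_half_le ht
    have hb := tanh_half_pos ht
    rw [kernelPhi_of_pos ht, abs_of_pos ht]
    calc (1 + tanh (t / 2)) / π * ellipticK (1 / cosh (t / 2)) - 1
        ≤ (1 + tanh (t / 2)) / π * (π / (2 * tanh (t / 2))) - 1 := by gcongr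
      _ = (1 - tanh (t / 2)) / (2 * tanh (t / 2)) := by field_simp; ring

/-- positivity and exponential decay of `kernelPhi`. -/
theorem kernelPhi_pos_and_exp_decay :
    (∀ t : ℝ, t ≠ 0 → 0 < kernelPhi t) ∧
    (∃ C c : ℝ, 0 < C ∧ 0 < c ∧
      ∀ t : ℝ, 1 ≤ |t| → kernelPhi t ≤ C * Real.exp (-c * |t|)) := by
  have hexp_one : exp (-1) < 1 := exp_lt_one_iff.2 (by norm_num)
  refine ⟨fun t ht => kernelPhi_pos ht,
    (1 - exp (-1))⁻¹, 1, inv_pos.2 (sub_pos.2 hexp_one), one_pos, fun t ht => ?_⟩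
  have ht0 : t ≠ 0 := abs_pos.1 (by linarith)
  calc kernelPhi t ≤ exp (-|t|) / (1 - exp (-|t|)) := kernelPhi_le_exp_neg_abs_div ht0
    _ ≤ exp (-|t|) / (1 - exp (-1)) := by gcongr
    _ = (1 - exp (-1))⁻¹ * exp (-1 * |t|) := by rw [neg_one_mul, div_eq_inv_mul]
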